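/- Let C₀ ∈ GL₂(ℂ) be in normal form, i.e. of one of the forms diag(ξ, ξ), diag(ξ₁, ξ₂) with ξ₁ ≠ ξ₂, or [[ξ, ξ], [0, ξ]], with ξ, ξ₁, ξ₂ in the fundamental annulus C_q := {z ∈ ℂ : |q| < |z| ≤ 1}. If Λ ∈ GL₂(O(ℂ*)) satisfies Λ(qx) C₀ = C₀ Λ(x) for all x ≠ 0, then Λ is constant, equal to a matrix L ∈ GL₂(ℂ) that commutes with C₀: L C₀ = C₀ L. -/

import Mathlib

open Matrix

/-- Entrywise holomorphy on `ℂ ∖ {0}` of a matrix-valued function. -/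
def MatHolo (M : ℂ → Matrix (Fin 2) (Fin 2) ℂ) : Prop :=
  ∀ i j : Fin 2, ∀ x : ℂ, x ≠ 0 → DifferentiableAt ℂ (fun y => M y i j) x

/-- `GL₂(O(ℂ*))`: matrices holomorphic on `ℂ*` and invertible at every `x ≠ 0`. -/
def GLO (Λ : ℂ → Matrix (Fin 2) (Fin 2) ℂ) : Prop :=
  MatHolo Λ ∧ ∀ x : ℂ, x ≠ 0 → IsUnit (Λ x).det

/-- Membership in the fundamental annulus `C_q = {z : |q| < |z| ≤ 1}`. -/
def InAnn (q z : ℂ) : Prop := ‖q‖ < ‖z‖ ∧ ‖z‖ ≤ 1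

/-- The three normal forms (trivial, generic, logarithmic) with spectrum in `C_q`. -/
def NormalForm (q : ℂ) (C : Matrix (Fin 2) (Fin 2) ℂ) : Prop :=
  (∃ ξ : ℂ, InAnn q ξ ∧ C = Matrix.diagonal ![ξ, ξ]) ∨
  (∃ ξ1 ξ2 : ℂ, InAnn q ξ1 ∧ InAnn q ξ2 ∧ ξ1 ≠ ξ2 ∧ C = Matrix.diagonal ![ξ1, ξ2]) ∨
  (∃ ξ : ℂ, InAnn q ξ ∧ C = !![ξ, ξ; 0, ξ])

/-!
Entrywise, `Λ (q x) C₀ = C₀ Λ x` says that each coefficient `f` of `Λ` satisfies a scalar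
`q`-difference equation `f (q z) = c f z` with `|q| < |c| < |q|⁻¹`, or, for the Jordan block,
`f (q z) = f z + γ` with `γ` built from entries already known to be constant. The function `f`
is bounded on the annulus `C_q`, and the equation transports this bound to every annulus
`q ^ k C_q` with at most geometric (resp. linear) growth in `k`; since `|c q| < 1`, this forces
`z f z → 0` at `0`, so `f` extends to an entire function. Letting `z → 0` along `q ^ n z` then
shows that `γ = 0`, that `f` is constant when `c = 1`, and, applying the same argument to
`f z / z` (which has multiplier `c / q`, of modulus `> 1`), that `f = 0` when `c ≠ 1`.
-/

open Filter Set Topology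

section QDifference

variable {q : ℂ}

theorem InAnn.ne_zero {z : ℂ} (h : InAnn q z) : z ≠ 0 :=
  norm_pos_iff.1 ((norm_nonneg q).trans_lt h.1)

theorem InAnn.norm_div_bounds {a b : ℂ} (ha : InAnn q a) (hb : InAnn q b) :
    ‖q‖ < ‖a / b‖ ∧ ‖q‖ * ‖a / b‖ < 1 := by
  have hb0 : 0 < ‖b‖ := (norm_nonneg q).trans_lt hb.1
  rw [_root_.norm_div]
  refine ⟨ha.1.trans_le (le_div_self (norm_nonneg a) hb0 hb.2), ?_⟩
  rw [mul_div_assoc', div_lt_one hb0]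
  calc ‖q‖ * ‖a‖ ≤ ‖q‖ := mul_le_of_le_one_right (norm_nonneg q) ha.2
    _ < ‖b‖ := hb.1

theorem apply_pow_mul_of_apply_mul_eq_add (hq : q ≠ 0) {f : ℂ → ℂ} {γ : ℂ}
    (hrel : ∀ z ≠ 0, f (q * z) = f z + γ) (n : ℕ) {z : ℂ} (hz : z ≠ 0) :
    f (q ^ n * z) = f z + n * γ := by
  induction n with
  | zero => simp
  | succ n ih =>
    rw [pow_succ', mul_assoc, hrel _ (mul_ne_zero (pow_ne_zero n hq) hz), ih]
    push_cast
    ring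

theorem apply_pow_mul_of_apply_mul_eq_mul (hq : q ≠ 0) {f : ℂ → ℂ} {c : ℂ}
    (hrel : ∀ z ≠ 0, f (q * z) = c * f z) (n : ℕ) {z : ℂ} (hz : z ≠ 0) :
    f (q ^ n * z) = c ^ n * f z := by
  induction n with
  | zero => simp
  | succ n ih =>
    rw [pow_succ', mul_assoc, hrel _ (mul_ne_zero (pow_ne_zero n hq) hz), ih, pow_succ']
    ring

theorem exists_bound_of_inAnn (hq0 : 0 < ‖q‖) {f : ℂ → ℂ} (hf : ContinuousOn f {0}ᶜ) :
    ∃ M : ℝ, ∀ w, InAnn q w → ‖f w‖ ≤ M := by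
  have hK : IsCompact (Metric.closedBall (0 : ℂ) 1 \ Metric.ball 0 ‖q‖) :=
    (isCompact_closedBall 0 1).diff Metric.isOpen_ball
  have hK0 : Metric.closedBall (0 : ℂ) 1 \ Metric.ball 0 ‖q‖ ⊆ {0}ᶜ := fun w hw (hw0 : w = 0) =>
    hw.2 (by simpa [hw0] using hq0)
  obtain ⟨M, hM⟩ := hK.exists_bound_of_continuousOn (hf.mono hK0)
  exact ⟨M, fun w hw => hM w ⟨by simpa using hw.2, by simpa using hw.1.le⟩⟩

theorem tendsto_mul_self_of_bound (hq0 : 0 < ‖q‖) (hq1 : ‖q‖ < 1) {f : ℂ → ℂ} {B : ℕ → ℝ}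
    (hB : Tendsto (fun k => ‖q‖ ^ k * B k) atTop (𝓝 0))
    (hfB : ∀ k : ℕ, ∀ w, InAnn q w → ‖f (q ^ k * w)‖ ≤ B k) :
    Tendsto (fun z => z * f z) (𝓝[≠] 0) (𝓝 0) := by
  rw [Metric.tendsto_nhdsWithin_nhds]
  intro ε hε
  obtain ⟨m, hm⟩ := Metric.tendsto_atTop.1 hB ε hε
  refine ⟨‖q‖ ^ m, pow_pos hq0 m, fun z hz hzm => ?_⟩
  rw [dist_zero_right] at hzm ⊢
  obtain ⟨k, hk1, hk⟩ := exists_nat_pow_near_of_lt_one (norm_pos_iff.2 hz)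
    (hzm.le.trans (pow_le_one₀ hq0.le hq1.le)) hq0 hq1
  have hmk : m ≤ k := by
    have := hk1.trans hzm
    rw [pow_lt_pow_iff_right_of_lt_one₀ hq0 hq1] at this
    omega
  have hw : InAnn q (z / q ^ k) := by
    rw [InAnn, norm_div, norm_pow, lt_div_iff₀ (pow_pos hq0 k), div_le_one (pow_pos hq0 k),
      ← pow_succ']
    exact ⟨hk1, hk⟩
  calc ‖z * f z‖ = ‖z‖ * ‖f (q ^ k * (z / q ^ k))‖ := by
        rw [norm_mul, mul_div_cancel₀ _ (pow_ne_zero k (norm_pos_iff.1 hq0))]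
    _ ≤ ‖q‖ ^ k * B k := mul_le_mul hk (hfB k _ hw) (norm_nonneg _) (by positivity)
    _ ≤ |‖q‖ ^ k * B k| := le_abs_self _
    _ < ε := by simpa using hm k hmk

theorem exists_differentiable_eqOn_of_tendsto {f : ℂ → ℂ} (hf : DifferentiableOn ℂ f {0}ᶜ)
    (h : Tendsto (fun z => z * f z) (𝓝[≠] 0) (𝓝 0)) :
    ∃ g : ℂ → ℂ, Differentiable ℂ g ∧ EqOn g f {0}ᶜ := by
  have hF : Differentiable ℂ (fun z => z * f z) := by
    rw [← differentiableOn_univ,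
      ← Complex.differentiableOn_compl_singleton_and_continuousAt_iff univ_mem]
    refine ⟨differentiableOn_id.mul (hf.mono fun z hz => hz.2), ?_⟩
    exact continuousWithinAt_compl_self.1 (by simpa [ContinuousWithinAt] using h)
  refine ⟨dslope (fun z => z * f z) 0, ?_, fun z hz => ?_⟩
  · rw [← differentiableOn_univ, Complex.differentiableOn_dslope univ_mem]
    exact hF.differentiableOn
  · rw [dslope_of_ne _ hz, slope_def_field]
    field_simp [show z ≠ 0 from hz]
    ring

theorem tendsto_apply_pow_mul (hq1 : ‖q‖ < 1) {g : ℂ → ℂ} (hg : ContinuousAt g 0) (z : ℂ) :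
    Tendsto (fun n : ℕ => g (q ^ n * z)) atTop (𝓝 (g 0)) :=
  hg.tendsto.comp (by simpa using (tendsto_pow_atTop_nhds_zero_of_norm_lt_one hq1).mul_const z)

theorem apply_zero_eq_of_apply_mul_eq (hq : q ≠ 0) (hq1 : ‖q‖ < 1) {g φ : ℂ → ℂ}
    (hg : ContinuousAt g 0) (hφ : Continuous φ) (hrel : ∀ z ≠ 0, g (q * z) = φ (g z)) :
    g 0 = φ (g 0) := by
  refine tendsto_nhds_unique (tendsto_apply_pow_mul hq1 hg q) ?_
  refine ((hφ.tendsto _).comp (tendsto_apply_pow_mul hq1 hg 1)).congr fun n => ?_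
  rw [Function.comp_apply, ← hrel _ (mul_ne_zero (pow_ne_zero n hq) one_ne_zero), mul_one,
    mul_comm]

theorem apply_eq_apply_zero_of_apply_mul_eq (hq : q ≠ 0) (hq1 : ‖q‖ < 1) {g : ℂ → ℂ}
    (hg : ContinuousAt g 0) (hrel : ∀ z ≠ 0, g (q * z) = g z) {z : ℂ} (hz : z ≠ 0) :
    g z = g 0 := by
  refine tendsto_nhds_unique ?_ (tendsto_apply_pow_mul hq1 hg z)
  refine tendsto_const_nhds.congr fun n => ?_
  simpa using (apply_pow_mul_of_apply_mul_eq_mul hq (c := 1) (by simpa using hrel) n hz).symm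

theorem apply_eq_zero_of_apply_mul_eq_mul (hq : q ≠ 0) (hq1 : ‖q‖ < 1) {g : ℂ → ℂ} {a : ℂ}
    (hg : ContinuousAt g 0) (ha : 1 < ‖a‖) (hrel : ∀ z ≠ 0, g (q * z) = a * g z) {z : ℂ}
    (hz : z ≠ 0) : g z = 0 := by
  have ha0 : a ≠ 0 := norm_pos_iff.1 (one_pos.trans ha)
  have hlim := (tendsto_pow_atTop_nhds_zero_of_norm_lt_one
    (by rw [norm_inv]; exact inv_lt_one_of_one_lt₀ ha)).mul (tendsto_apply_pow_mul hq1 hg z)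
  rw [zero_mul] at hlim
  refine tendsto_nhds_unique (tendsto_const_nhds.congr fun n => ?_) hlim
  rw [apply_pow_mul_of_apply_mul_eq_mul hq hrel n hz, ← mul_assoc, ← mul_pow,
    inv_mul_cancel₀ ha0, one_pow, one_mul]

theorem apply_eq_apply_one_of_apply_mul_eq_add (hq0 : 0 < ‖q‖) (hq1 : ‖q‖ < 1) {f : ℂ → ℂ} {γ : ℂ}
    (hf : DifferentiableOn ℂ f {0}ᶜ) (hrel : ∀ z ≠ 0, f (q * z) = f z + γ) :
    γ = 0 ∧ ∀ z ≠ 0, f z = f 1 := by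
  have hq : q ≠ 0 := norm_pos_iff.1 hq0
  obtain ⟨M, hM⟩ := exists_bound_of_inAnn hq0 hf.continuousOn
  have hlim : Tendsto (fun k : ℕ => ‖q‖ ^ k * (M + k * ‖γ‖)) atTop (𝓝 0) := by
    have := ((tendsto_pow_atTop_nhds_zero_of_lt_one hq0.le hq1).mul_const M).add
      ((tendsto_self_mul_const_pow_of_lt_one hq0.le hq1).mul_const ‖γ‖)
    rw [zero_mul, zero_mul, add_zero] at this
    exact this.congr fun k => by ring
  have hbound (k : ℕ) (w : ℂ) (hw : InAnn q w) : ‖f (q ^ k * w)‖ ≤ M + k * ‖γ‖ := by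
    rw [apply_pow_mul_of_apply_mul_eq_add hq hrel k hw.ne_zero]
    refine (norm_add_le _ _).trans (add_le_add (hM w hw) ?_)
    rw [norm_mul, Complex.norm_natCast]
  obtain ⟨g, hg, hgf⟩ :=
    exists_differentiable_eqOn_of_tendsto hf (tendsto_mul_self_of_bound hq0 hq1 hlim hbound)
  have hgrel : ∀ z ≠ 0, g (q * z) = g z + γ := fun z hz => by
    rw [hgf hz, hgf (mul_ne_zero hq hz), hrel z hz]
  have hγ : γ = 0 := by
    simpa using apply_zero_eq_of_apply_mul_eq hq hq1 hg.continuous.continuousAt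
      (continuous_add_const γ) hgrel
  subst hγ
  refine ⟨rfl, fun z hz => ?_⟩
  simp only [add_zero] at hgrel
  rw [← hgf hz, ← hgf one_ne_zero,
    apply_eq_apply_zero_of_apply_mul_eq hq hq1 hg.continuous.continuousAt hgrel hz,
    apply_eq_apply_zero_of_apply_mul_eq hq hq1 hg.continuous.continuousAt hgrel one_ne_zero]

theorem apply_eq_apply_one_of_apply_mul_eq_mul (hq0 : 0 < ‖q‖) (hq1 : ‖q‖ < 1) {f : ℂ → ℂ} {c : ℂ}
    (hc0 : ‖q‖ < ‖c‖) (hc1 : ‖q‖ * ‖c‖ < 1) (hf : DifferentiableOn ℂ f {0}ᶜ)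
    (hrel : ∀ z ≠ 0, f (q * z) = c * f z) :
    ∀ z ≠ 0, f z = f 1 := by
  have hq : q ≠ 0 := norm_pos_iff.1 hq0
  obtain ⟨M, hM⟩ := exists_bound_of_inAnn hq0 hf.continuousOn
  have hlim : Tendsto (fun k : ℕ => ‖q‖ ^ k * (‖c‖ ^ k * M)) atTop (𝓝 0) := by
    have := (tendsto_pow_atTop_nhds_zero_of_lt_one (by positivity) hc1).mul_const M
    rw [zero_mul] at this
    exact this.congr fun k => by ring
  have hbound (k : ℕ) (w : ℂ) (hw : InAnn q w) : ‖f (q ^ k * w)‖ ≤ ‖c‖ ^ k * M := by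
    rw [apply_pow_mul_of_apply_mul_eq_mul hq hrel k hw.ne_zero, norm_mul, norm_pow]
    exact mul_le_mul_of_nonneg_left (hM w hw) (by positivity)
  obtain ⟨g, hg, hgf⟩ :=
    exists_differentiable_eqOn_of_tendsto hf (tendsto_mul_self_of_bound hq0 hq1 hlim hbound)
  have hgrel : ∀ z ≠ 0, g (q * z) = c * g z := fun z hz => by
    rw [hgf hz, hgf (mul_ne_zero hq hz), hrel z hz]
  suffices ∀ z ≠ 0, g z = g 1 from fun z hz => by rw [← hgf hz, ← hgf one_ne_zero, this z hz]
  by_cases hc : c = 1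
  · subst hc
    simp only [one_mul] at hgrel
    intro z hz
    rw [apply_eq_apply_zero_of_apply_mul_eq hq hq1 hg.continuous.continuousAt hgrel hz,
      apply_eq_apply_zero_of_apply_mul_eq hq hq1 hg.continuous.continuousAt hgrel one_ne_zero]
  · have hg0 : g 0 = 0 := by
      have := apply_zero_eq_of_apply_mul_eq hq hq1 hg.continuous.continuousAt
        (continuous_const_mul c) hgrel
      have h' : (c - 1) * g 0 = 0 := by linear_combination -this
      exact (mul_eq_zero.1 h').resolve_left (sub_ne_zero.2 hc)
    have hslope : ∀ z ≠ 0, dslope g 0 (q * z) = c / q * dslope g 0 z := fun z hz => by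
      rw [dslope_of_ne _ hz, dslope_of_ne _ (mul_ne_zero hq hz), slope_def_field,
        slope_def_field, hgrel z hz, hg0]
      field_simp
      ring
    have hcq : 1 < ‖c / q‖ := by rwa [norm_div, one_lt_div hq0]
    have hg_eq_zero : ∀ z ≠ 0, g z = 0 := fun z hz => by
      have := apply_eq_zero_of_apply_mul_eq_mul hq hq1 (continuousAt_dslope_same.2 (hg 0)) hcq
        hslope hz
      rw [dslope_of_ne _ hz, slope_def_field, hg0, sub_zero, sub_zero, div_eq_zero_iff] at this
      exact this.resolve_right hz
    intro z hz
    rw [hg_eq_zero z hz, hg_eq_zero 1 one_ne_zero]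

end QDifference

theorem MatHolo.differentiableOn {Λ : ℂ → Matrix (Fin 2) (Fin 2) ℂ} (h : MatHolo Λ) (i j : Fin 2) :
    DifferentiableOn ℂ (fun y => Λ y i j) {0}ᶜ :=
  fun x hx => (h i j x hx).differentiableWithinAt

theorem apply_eq_apply_one_of_mul_diagonal_eq {n : Type*} [Fintype n] [DecidableEq n] {q : ℂ}
    (hq0 : 0 < ‖q‖) (hq1 : ‖q‖ < 1) {d : n → ℂ} (hd : ∀ i, InAnn q (d i))
    {Λ : ℂ → Matrix n n ℂ} (hΛ : ∀ i j, DifferentiableOn ℂ (fun y => Λ y i j) {0}ᶜ)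
    (hrel : ∀ x ≠ 0, Λ (q * x) * diagonal d = diagonal d * Λ x) :
    ∀ x ≠ 0, Λ x = Λ 1 := by
  intro x hx
  ext i j
  obtain ⟨hc0, hc1⟩ := (hd i).norm_div_bounds (hd j)
  refine apply_eq_apply_one_of_apply_mul_eq_mul hq0 hq1 hc0 hc1 (hΛ i j) (fun z hz => ?_) x hx
  have h := congrArg (· i j) (hrel z hz)
  simp only [mul_diagonal, diagonal_mul] at h
  rw [div_mul_eq_mul_div, eq_div_iff (hd j).ne_zero, h]

theorem apply_eq_apply_one_of_mul_jordan_eq {q : ℂ} (hq0 : 0 < ‖q‖) (hq1 : ‖q‖ < 1) {ξ : ℂ}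
    (hξ : ξ ≠ 0) {Λ : ℂ → Matrix (Fin 2) (Fin 2) ℂ}
    (hΛ : ∀ i j, DifferentiableOn ℂ (fun y => Λ y i j) {0}ᶜ)
    (hrel : ∀ x ≠ 0, Λ (q * x) * !![ξ, ξ; 0, ξ] = !![ξ, ξ; 0, ξ] * Λ x) :
    ∀ x ≠ 0, Λ x = Λ 1 := by
  have hq : q ≠ 0 := norm_pos_iff.1 hq0
  have hentries : ∀ z ≠ 0, Λ (q * z) 0 0 = Λ z 0 0 + Λ z 1 0 ∧
      Λ (q * z) 0 0 + Λ (q * z) 0 1 = Λ z 0 1 + Λ z 1 1 ∧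
      Λ (q * z) 1 0 = Λ z 1 0 ∧ Λ (q * z) 1 0 + Λ (q * z) 1 1 = Λ z 1 1 := by
    intro z hz
    have h (i j : Fin 2) := congrArg (· i j) (hrel z hz)
    have h00 := h 0 0
    have h01 := h 0 1
    have h10 := h 1 0
    have h11 := h 1 1
    simp only [mul_apply, Fin.sum_univ_two, of_apply, cons_val', cons_val_zero, cons_val_one,
      empty_val', cons_val_fin_one, zero_mul, mul_zero, add_zero, zero_add]
      at h00 h01 h10 h11
    exact ⟨mul_right_cancel₀ hξ (by linear_combination h00),
      mul_right_cancel₀ hξ (by linear_combination h01),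
      mul_right_cancel₀ hξ (by linear_combination h10),
      mul_right_cancel₀ hξ (by linear_combination h11)⟩
  have hc : ∀ x ≠ 0, Λ x 1 0 = Λ 1 1 0 :=
    (apply_eq_apply_one_of_apply_mul_eq_add (γ := 0) hq0 hq1 (hΛ 1 0) fun z hz => by
      rw [add_zero, (hentries z hz).2.2.1]).2
  obtain ⟨hc0, ha⟩ := apply_eq_apply_one_of_apply_mul_eq_add hq0 hq1 (hΛ 0 0) fun z hz => by
    rw [(hentries z hz).1, hc z hz]
  have hd : ∀ x ≠ 0, Λ x 1 1 = Λ 1 1 1 :=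
    (apply_eq_apply_one_of_apply_mul_eq_add (γ := 0) hq0 hq1 (hΛ 1 1) fun z hz => by
      linear_combination (hentries z hz).2.2.2 - hc (q * z) (mul_ne_zero hq hz) - hc0).2
  have hb : ∀ x ≠ 0, Λ x 0 1 = Λ 1 0 1 :=
    (apply_eq_apply_one_of_apply_mul_eq_add (γ := Λ 1 1 1 - Λ 1 0 0) hq0 hq1 (hΛ 0 1) fun z hz => by
      linear_combination (hentries z hz).2.1 - ha (q * z) (mul_ne_zero hq hz) + hd z hz).2
  intro x hx
  ext i j
  fin_cases i <;> fin_cases j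
  exacts [ha x hx, hb x hx, hc x hx, hd x hx]

/-- An automorphism of a matrix in normal form is a constant matrix commuting with it. -/
theorem stmt14 (q : ℂ) (hq0 : 0 < ‖q‖) (hq1 : ‖q‖ < 1)
    (C0 : Matrix (Fin 2) (Fin 2) ℂ) (hC0 : NormalForm q C0)
    (Λ : ℂ → Matrix (Fin 2) (Fin 2) ℂ) (hΛ : GLO Λ)
    (hcomm : ∀ x : ℂ, x ≠ 0 → Λ (q * x) * C0 = C0 * Λ x) :
    ∃ L : Matrix (Fin 2) (Fin 2) ℂ, IsUnit L.det ∧ (∀ x : ℂ, x ≠ 0 → Λ x = L) ∧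
      L * C0 = C0 * L := by
  obtain ⟨hholo, hunit⟩ := hΛ
  have hconst : ∀ x ≠ 0, Λ x = Λ 1 := by
    rcases hC0 with ⟨ξ, hξ, rfl⟩ | ⟨ξ₁, ξ₂, hξ₁, hξ₂, -, rfl⟩ | ⟨ξ, hξ, rfl⟩
    · exact apply_eq_apply_one_of_mul_diagonal_eq hq0 hq1 (by simp [Fin.forall_fin_two, hξ])
        hholo.differentiableOn hcomm
    · exact apply_eq_apply_one_of_mul_diagonal_eq hq0 hq1 (by simp [Fin.forall_fin_two, hξ₁, hξ₂])
        hholo.differentiableOn hcomm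
    · exact apply_eq_apply_one_of_mul_jordan_eq hq0 hq1 hξ.ne_zero hholo.differentiableOn hcomm
  refine ⟨Λ 1, hunit 1 one_ne_zero, hconst, ?_⟩
  simpa [hconst q (norm_pos_iff.1 hq0)] using hcomm 1 one_ne_zero
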